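/- Suppose φ̄ : (Fin n → ℝ) → ℝ is differentiable and satisfies the steady-state HJB equation with state cost m, i.e. for all x: ∇φ̄(x) ⬝ᵥ f(x) − (1/4)·((g x)ᵀ.mulVec (∇φ̄ x)) ⬝ᵥ (R⁻¹.mulVec ((g x)ᵀ.mulVec (∇φ̄ x))) + m(x) = 0. Let v : ℝ → (Fin p → ℝ) be an external input and let x : ℝ → (Fin n → ℝ) be differentiable and solve x'(t) = f(x(t)) − (1/2)·(g (x t)).mulVec (R⁻¹.mulVec ((g (x t))ᵀ.mulVec (∇φ̄ (x t)))) + (g (x t)).mulVec (v t) for all t. Then for every t, the derivative of t ↦ φ̄(x(t)) at t is at most −m(x(t)) + ‖v(t)‖²_R. -/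

import Mathlib

open Matrix

/-- Euclidean gradient of a scalar function on `Fin n → ℝ`:
the vector of partial derivatives. -/
noncomputable def grad {n : ℕ} (φ : (Fin n → ℝ) → ℝ) (x : Fin n → ℝ) : Fin n → ℝ :=
  fun i => fderiv ℝ φ x (Pi.single i 1)

/-- `R`-weighted squared norm `‖u‖²_R = u ⬝ᵥ R.mulVec u`. -/
def sqR {p : ℕ} (R : Matrix (Fin p) (Fin p) ℝ) (u : Fin p → ℝ) : ℝ :=
  u ⬝ᵥ R.mulVec u

/-!
Along the closed-loop trajectory the chain rule gives, with `w = gᵀ ∇φ̄`,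
`d/dt φ̄(x) = ∇φ̄ ⬝ f − ½ w ⬝ R⁻¹ w + w ⬝ v`, and the HJB equation replaces `∇φ̄ ⬝ f` by
`¼ w ⬝ R⁻¹ w − m`. What remains is `w ⬝ v − ¼ w ⬝ R⁻¹ w ≤ ‖v‖²_R`, which is
`0 ≤ ‖v − ½ R⁻¹ w‖²_R` after completing the square.
-/

theorem fderiv_apply_eq_grad_dotProduct {n : ℕ} (φ : (Fin n → ℝ) → ℝ) (a y : Fin n → ℝ) :
    fderiv ℝ φ a y = grad φ a ⬝ᵥ y := by
  conv_lhs => rw [pi_eq_sum_univ' y]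
  simp [grad, dotProduct, mul_comm]

theorem DifferentiableAt.hasDerivAt_comp_eq_grad_dotProduct {n : ℕ} {φ : (Fin n → ℝ) → ℝ}
    {x : ℝ → Fin n → ℝ} {x' : Fin n → ℝ} {t : ℝ} (hφ : DifferentiableAt ℝ φ (x t))
    (hx : HasDerivAt x x' t) : HasDerivAt (fun s => φ (x s)) (grad φ (x t) ⬝ᵥ x') t := by
  rw [← fderiv_apply_eq_grad_dotProduct]
  exact hφ.hasFDerivAt.comp_hasDerivAt t hx

theorem Matrix.PosDef.dotProduct_sub_quarter_inv_le {ι : Type*} [Fintype ι] [DecidableEq ι]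
    {R : Matrix ι ι ℝ} (hR : R.PosDef) (w v : ι → ℝ) :
    w ⬝ᵥ v - (1 / 4) * (w ⬝ᵥ R⁻¹ *ᵥ w) ≤ v ⬝ᵥ R *ᵥ v := by
  have hRR : R * R⁻¹ = 1 := mul_nonsing_inv R ((isUnit_iff_isUnit_det R).1 hR.isUnit)
  have hsymm : Rᵀ = R := (isHermitian_iff_isSymm.1 hR.isHermitian).eq
  have hcross : R⁻¹ *ᵥ w ⬝ᵥ R *ᵥ v = w ⬝ᵥ v := by
    rw [dotProduct_mulVec, ← mulVec_transpose, hsymm, mulVec_mulVec, hRR, one_mulVec,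
      dotProduct_comm]
  set z := v - (1 / 2 : ℝ) • R⁻¹ *ᵥ w
  have hz : z ⬝ᵥ R *ᵥ z = v ⬝ᵥ R *ᵥ v - w ⬝ᵥ v + (1 / 4) * (w ⬝ᵥ R⁻¹ *ᵥ w) := by
    simp only [z, mulVec_sub, mulVec_smul, mulVec_mulVec, hRR, one_mulVec, sub_dotProduct,
      dotProduct_sub, smul_dotProduct, dotProduct_smul, smul_eq_mul, hcross]
    rw [dotProduct_comm v w, dotProduct_comm (R⁻¹ *ᵥ w) w]
    ring
  have hnonneg : 0 ≤ z ⬝ᵥ R *ᵥ z := by simpa using hR.posSemidef.dotProduct_mulVec_nonneg z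
  linarith

theorem stmt_12_general {n p : ℕ}
    (f : (Fin n → ℝ) → (Fin n → ℝ))
    (g : (Fin n → ℝ) → Matrix (Fin n) (Fin p) ℝ)
    (R : Matrix (Fin p) (Fin p) ℝ)
    (hRpd : R.PosDef)
    (m : (Fin n → ℝ) → ℝ)
    (φb : (Fin n → ℝ) → ℝ)
    (hφ : Differentiable ℝ φb)
    (hHJB : ∀ x, grad φb x ⬝ᵥ f x
        - (1/4) * ((g x)ᵀ.mulVec (grad φb x) ⬝ᵥ R⁻¹.mulVec ((g x)ᵀ.mulVec (grad φb x)))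
        + m x = 0)
    (v : ℝ → (Fin p → ℝ))
    (x : ℝ → (Fin n → ℝ))
    (hx : ∀ t, HasDerivAt x
      (f (x t) - (1/2 : ℝ) • (g (x t)).mulVec (R⁻¹.mulVec ((g (x t))ᵀ.mulVec (grad φb (x t))))
        + (g (x t)).mulVec (v t)) t) :
    ∀ t, deriv (fun s => φb (x s)) t ≤ -(m (x t)) + sqR R (v t) := by
  intro t
  set G := grad φb (x t)
  set w := (g (x t))ᵀ *ᵥ G
  have hG_mulVec (u : Fin p → ℝ) : G ⬝ᵥ g (x t) *ᵥ u = w ⬝ᵥ u := by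
    rw [dotProduct_mulVec, ← mulVec_transpose]
  have hderiv : deriv (fun s => φb (x s)) t
      = G ⬝ᵥ f (x t) - (1 / 2) * (w ⬝ᵥ R⁻¹ *ᵥ w) + w ⬝ᵥ v t := by
    rw [((hφ (x t)).hasDerivAt_comp_eq_grad_dotProduct (hx t)).deriv, dotProduct_add,
      dotProduct_sub, dotProduct_smul, hG_mulVec, hG_mulVec, smul_eq_mul]
  rw [hderiv, sqR]
  linarith [hHJB (x t), hRpd.dotProduct_sub_quarter_inv_le w (v t)]

theorem stmt_12 {n p : ℕ}
    (f : (Fin n → ℝ) → (Fin n → ℝ))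
    (g : (Fin n → ℝ) → Matrix (Fin n) (Fin p) ℝ)
    (R : Matrix (Fin p) (Fin p) ℝ)
    (hRsymm : R.IsSymm) (hRpd : R.PosDef)
    (m : (Fin n → ℝ) → ℝ)
    (φb : (Fin n → ℝ) → ℝ)
    (hφ : Differentiable ℝ φb)
    (hHJB : ∀ x, grad φb x ⬝ᵥ f x
        - (1/4) * ((g x)ᵀ.mulVec (grad φb x) ⬝ᵥ R⁻¹.mulVec ((g x)ᵀ.mulVec (grad φb x)))
        + m x = 0)
    (v : ℝ → (Fin p → ℝ))
    (x : ℝ → (Fin n → ℝ))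
    (hx : ∀ t, HasDerivAt x
      (f (x t) - (1/2 : ℝ) • (g (x t)).mulVec (R⁻¹.mulVec ((g (x t))ᵀ.mulVec (grad φb (x t))))
        + (g (x t)).mulVec (v t)) t) :
    ∀ t, deriv (fun s => φb (x s)) t ≤ -(m (x t)) + sqR R (v t) :=
  stmt_12_general f g R hRpd m φb hφ hHJB v x hx
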